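/- arXiv:cs/0610137 — 3 statements merged into one kernel-verified Lean document; each statement's English description precedes it below -/
import Mathlib

section
/- If the reads of K are included in the reads of K', then K ⊒ K' in the weak atomic preorder; that is, for every state σ, if ⟨K'⟩_{σ;ε} ⇒ ⟨end⟩_{σ;δ'} then ⟨K⟩_{σ;ε} ⇒ ⟨end⟩_{σ;δ} for some δ. -/
/-! A pure sequence can only fail at a read, and a read fails exactly when the reads logged so
far exceed the state. So `seq K'` reaching `end` from the empty log forces `Rl K' ≤ σ`, hence
`Rl K ≤ σ`, and then every read of `seq K` succeeds. -/

/-- Actions: reads and writes of names. -/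
inductive Act (N : Type*) where
  | rd (a : N)
  | wt (a : N)

/-- Multiset of names written in a log. -/
def Wl {N : Type*} : List (Act N) → Multiset N
  | [] => 0
  | .wt a :: δ => Wl δ + {a}
  | .rd _ :: δ => Wl δ

/-- Multiset of names read in a log. -/
def Rl {N : Type*} : List (Act N) → Multiset N
  | [] => 0
  | .rd a :: δ => Rl δ + {a}
  | .wt _ :: δ => Rl δ

/-- Atomic expressions. -/
inductive Expr (N : Type*) where
  | done
  | retry
  | rd (a : N) (M : Expr N)
  | wt (a : N) (M : Expr N)
  | orElse (M₁ M₂ : Expr N)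

/-- Ongoing atomic expressions. -/
inductive Ong (N : Type*) where
  | block (M : Expr N) (σ : Multiset N) (δ : List (Act N))
  | orElse (A B : Ong N)

/-- One-step reduction of ongoing expressions. -/
inductive Step {N : Type*} : Ong N → Ong N → Prop where
  | rdOk {a : N} {M σ δ} (h : Rl δ + {a} ≤ σ) :
      Step (.block (.rd a M) σ δ) (.block M σ (δ ++ [.rd a]))
  | rdFail {a : N} {M σ δ} (h : ¬ Rl δ + {a} ≤ σ) :
      Step (.block (.rd a M) σ δ) (.block .retry σ δ)
  | wr {a : N} {M σ δ} :
      Step (.block (.wt a M) σ δ) (.block M σ (δ ++ [.wt a]))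
  | orE {M₁ M₂ : Expr N} {σ δ} :
      Step (.block (.orElse M₁ M₂) σ δ) (.orElse (.block M₁ σ δ) (.block M₂ σ δ))
  | orFail {σ : Multiset N} {δ B} : Step (.orElse (.block .retry σ δ) B) B
  | orEnd {σ : Multiset N} {δ B} : Step (.orElse (.block .done σ δ) B) (.block .done σ δ)
  | congL {A A' B : Ong N} (h : Step A A') : Step (.orElse A B) (.orElse A' B)
  | congR {A B B' : Ong N} (h : Step B B') : Step (.orElse A B) (.orElse A B')

/-- Multi-step reduction. -/
def Steps {N : Type*} : Ong N → Ong N → Prop := Relation.ReflTransGen Step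

/-- Logs with the same effect on state σ. -/
def EffEq {N : Type*} [DecidableEq N] (σ : Multiset N) (δ δ' : List (Act N)) : Prop :=
  σ - Rl δ + Wl δ = σ - Rl δ' + Wl δ'

/-- Weak atomic equivalence. -/
def AEq {N : Type*} [DecidableEq N] (M M' : Expr N) : Prop :=
  ∀ σ : Multiset N,
    ((∃ δ, Steps (.block M σ []) (.block .retry σ δ)) ∧
     (∃ δ', Steps (.block M' σ []) (.block .retry σ δ'))) ∨
    (∃ δ δ', Steps (.block M σ []) (.block .done σ δ) ∧
             Steps (.block M' σ []) (.block .done σ δ') ∧ EffEq σ δ δ')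

/-- Prefixing an action onto an expression. -/
def pre {N : Type*} : Act N → Expr N → Expr N
  | .rd a, M => .rd a M
  | .wt a, M => .wt a M

/-- The pure sequence expression α₁.….αₙ.end. -/
def seq {N : Type*} (K : List (Act N)) : Expr N := K.foldr pre .done

/-- Right-nested orElse of a nonempty list of expressions. -/
def ors {N : Type*} : Expr N → List (Expr N) → Expr N
  | M, [] => M
  | M, M' :: rest => .orElse M (ors M' rest)

@[simp]
lemma Rl_cons_rd {N : Type*} (a : N) (δ : List (Act N)) : Rl (.rd a :: δ) = Rl δ + {a} := rfl

@[simp]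
lemma Rl_cons_wt {N : Type*} (a : N) (δ : List (Act N)) : Rl (.wt a :: δ) = Rl δ := rfl

@[simp]
lemma Rl_nil {N : Type*} : Rl ([] : List (Act N)) = 0 := rfl

@[simp]
lemma Rl_append {N : Type*} (δ δ' : List (Act N)) : Rl (δ ++ δ') = Rl δ + Rl δ' := by
  induction δ with
  | nil => simp
  | cons α δ ih => cases α <;> simp [ih, add_right_comm]

@[simp]
lemma seq_cons_rd {N : Type*} (a : N) (K : List (Act N)) : seq (.rd a :: K) = .rd a (seq K) := rfl

@[simp]
lemma seq_cons_wt {N : Type*} (a : N) (K : List (Act N)) : seq (.wt a :: K) = .wt a (seq K) := rfl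

lemma eq_of_steps_block_retry {N : Type*} {σ : Multiset N} {δ : List (Act N)} {B : Ong N}
    (h : Steps (.block .retry σ δ) B) : B = .block .retry σ δ := by
  rcases h.cases_head with rfl | ⟨_, hstep, _⟩
  · rfl
  · cases hstep

lemma steps_seq_done {N : Type*} {σ : Multiset N} (K δ : List (Act N)) (h : Rl δ + Rl K ≤ σ) :
    Steps (.block (seq K) σ δ) (.block .done σ (δ ++ K)) := by
  unfold Steps
  induction K generalizing δ with
  | nil => simpa [seq] using Relation.ReflTransGen.refl
  | cons α K ih =>
    cases α with
    | rd a =>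
      have hread : Rl δ + {a} ≤ σ := le_trans (by simp) h
      have hrest : Rl (δ ++ [.rd a]) + Rl K ≤ σ := by simpa [add_right_comm, add_assoc] using h
      simpa using Relation.ReflTransGen.head (Step.rdOk hread) (ih _ hrest)
    | wt a =>
      have hrest : Rl (δ ++ [.wt a]) + Rl K ≤ σ := by simpa using h
      simpa using Relation.ReflTransGen.head Step.wr (ih _ hrest)

lemma add_Rl_le_of_steps_seq_done {N : Type*} {σ : Multiset N} (K δ : List (Act N))
    {δ'' : List (Act N)} (hδ : Rl δ ≤ σ) (h : Steps (.block (seq K) σ δ) (.block .done σ δ'')) :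
    Rl δ + Rl K ≤ σ := by
  induction K generalizing δ with
  | nil => simpa using hδ
  | cons α K ih =>
    rcases h.cases_head with heq | ⟨_, hstep, hrest⟩
    · cases α <;> cases heq
    cases α with
    | rd a =>
      cases hstep with
      | rdOk hread =>
        simpa [add_right_comm, add_assoc] using ih _ (by simpa using hread) hrest
      | rdFail _ => cases eq_of_steps_block_retry hrest
    | wt a =>
      cases hstep
      simpa using ih _ (by simpa using hδ) hrest

/-- If R(K) ⊆ R(K') then K ⊒ K': for every state σ, whenever ⟨K'⟩_{σ;ε} ends,
⟨K⟩_{σ;ε} ends as well. -/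
theorem stmt7 {N : Type*} (K K' : List (Act N)) (hR : Rl K ≤ Rl K') :
    ∀ σ : Multiset N,
      (∃ δ', Steps (.block (seq K') σ []) (.block .done σ δ')) →
      ∃ δ, Steps (.block (seq K) σ []) (.block .done σ δ) := by
  intro σ ⟨δ', hδ'⟩
  have hK' : Rl K' ≤ σ := by simpa using add_Rl_le_of_steps_seq_done K' [] (by simp) hδ'
  exact ⟨K, by simpa using steps_seq_done K [] (by simpa using hR.trans hK')⟩
end

section
/- Action prefix distributes over orElse up to weak atomic equivalence: α.(M orElse N) ≈ (α.M) orElse (α.N). -/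
/-!
Atomic expressions evaluate deterministically, so reduction can be replaced by a functional
evaluator returning the final log together with whether the expression ended or retried.
Both sides of the equation evaluate identically: a failing read makes both retry with the
empty log, and otherwise both branches of `orElse` continue from the same state and log.
-/

/-- `inl δ`: the expression ends with log `δ`; `inr δ`: it retries with log `δ`. -/
def Expr.eval {N : Type*} [DecidableEq N] :
    Expr N → Multiset N → List (Act N) → List (Act N) ⊕ List (Act N)
  | .done, _, δ => .inl δ
  | .retry, _, δ => .inr δ
  | .rd a M, σ, δ => if Rl δ + {a} ≤ σ then M.eval σ (δ ++ [.rd a]) else .inr δ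
  | .wt a M, σ, δ => M.eval σ (δ ++ [.wt a])
  | .orElse M₁ M₂, σ, δ => (M₁.eval σ δ).elim .inl fun _ => M₂.eval σ δ

def Ong.ofOutcome {N : Type*} (σ : Multiset N) : List (Act N) ⊕ List (Act N) → Ong N :=
  Sum.elim (.block .done σ) (.block .retry σ)

lemma Steps.orElse_left {N : Type*} {A A' : Ong N} (B : Ong N) (h : Steps A A') :
    Steps (.orElse A B) (.orElse A' B) :=
  Relation.ReflTransGen.lift (fun A => Ong.orElse A B) (fun _ _ => Step.congL) _ _ h

lemma Expr.steps_eval {N : Type*} [DecidableEq N] (M : Expr N) (σ : Multiset N)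
    (δ : List (Act N)) : Steps (.block M σ δ) (Ong.ofOutcome σ (M.eval σ δ)) := by
  induction M generalizing δ with
  | done | retry => exact .refl
  | rd a M ih =>
    by_cases hle : Rl δ + {a} ≤ σ
    · simpa only [eval, hle, if_true] using .head (Step.rdOk hle) (ih _)
    · simpa only [eval, hle, if_false] using .single (Step.rdFail hle)
  | wt a M ih => exact .head Step.wr (ih _)
  | orElse M₁ M₂ ih₁ ih₂ =>
    refine .head Step.orE ?_
    have h₁ := (ih₁ δ).orElse_left (.block M₂ σ δ)
    rcases hM₁ : M₁.eval σ δ with δ₁ | δ₁ <;> rw [hM₁] at h₁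
    · simpa only [eval, hM₁, Ong.ofOutcome, Sum.elim_inl] using h₁.tail Step.orEnd
    · simpa only [eval, hM₁, Sum.elim_inr] using (h₁.tail Step.orFail).trans (ih₂ δ)

lemma AEq.of_eval_eq {N : Type*} [DecidableEq N] {M M' : Expr N}
    (h : ∀ σ, M.eval σ [] = M'.eval σ []) : AEq M M' := by
  intro σ
  have hM := M.steps_eval σ []
  have hM' := M'.steps_eval σ []
  rw [← h σ] at hM'
  rcases hδ : M.eval σ [] with δ | δ <;> rw [hδ] at hM hM'
  · exact .inr ⟨δ, δ, hM, hM', rfl⟩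
  · exact .inl ⟨⟨δ, hM⟩, ⟨δ, hM'⟩⟩

lemma Expr.eval_pre_orElse {N : Type*} [DecidableEq N] (α : Act N) (M M' : Expr N)
    (σ : Multiset N) (δ : List (Act N)) :
    (pre α (.orElse M M')).eval σ δ = (Expr.orElse (pre α M) (pre α M')).eval σ δ := by
  cases α with
  | rd a => by_cases hle : Rl δ + {a} ≤ σ <;> simp [pre, eval, hle]
  | wt a => rfl

/-- Action prefix distributes over orElse: α.(M orElse N) ≈ (α.M) orElse (α.N). -/
theorem stmt9 {N : Type*} [DecidableEq N] (α : Act N) (M M' : Expr N) :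
    AEq (pre α (.orElse M M')) (.orElse (pre α M) (pre α M')) :=
  AEq.of_eval_eq fun σ => Expr.eval_pre_orElse α M M' σ []
end

section
/- orElse is idempotent up to weak atomic equivalence: M orElse M ≈ M. -/
/-!
Run from any state, every expression eventually retries or ends. If `M` retries, `M orElse M`
discards the first copy and retries with the second; if `M` ends with log `δ`, so does
`M orElse M`, with the same log.
-/

namespace Steps

variable {N : Type*}

theorem orElse_left_s11 {A A' B : Ong N} (h : Steps A A') : Steps (.orElse A B) (.orElse A' B) :=
  Relation.ReflTransGen.lift (fun X => Ong.orElse X B) (fun _ _ h => Step.congL h) _ _ h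

theorem orElse_of_retry {M₁ M₂ : Expr N} {σ : Multiset N} {δ δ' : List (Act N)}
    (h : Steps (.block M₁ σ δ) (.block .retry σ δ')) :
    Steps (.block (.orElse M₁ M₂) σ δ) (.block M₂ σ δ) :=
  .head .orE ((orElse_left_s11 h).tail .orFail)

theorem orElse_of_done {M₁ M₂ : Expr N} {σ : Multiset N} {δ δ' : List (Act N)}
    (h : Steps (.block M₁ σ δ) (.block .done σ δ')) :
    Steps (.block (.orElse M₁ M₂) σ δ) (.block .done σ δ') :=
  .head .orE ((orElse_left_s11 h).tail .orEnd)

end Steps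

theorem exists_steps_retry_or_done {N : Type*} (M : Expr N) (σ : Multiset N)
    (δ : List (Act N)) :
    ∃ δ', Steps (.block M σ δ) (.block .retry σ δ') ∨ Steps (.block M σ δ) (.block .done σ δ') := by
  induction M generalizing δ with
  | done => exact ⟨δ, .inr .refl⟩
  | retry => exact ⟨δ, .inl .refl⟩
  | rd a M ih =>
    by_cases h : Rl δ + {a} ≤ σ
    · obtain ⟨δ', hs⟩ := ih (δ ++ [.rd a])
      exact ⟨δ', hs.imp (.head (.rdOk h)) (.head (.rdOk h))⟩
    · exact ⟨δ, .inl (.single (.rdFail h))⟩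
  | wt a M ih =>
    obtain ⟨δ', hs⟩ := ih (δ ++ [.wt a])
    exact ⟨δ', hs.imp (.head .wr) (.head .wr)⟩
  | orElse M₁ M₂ ih₁ ih₂ =>
    obtain ⟨δ₁, hretry | hdone⟩ := ih₁ δ
    · obtain ⟨δ₂, hs⟩ := ih₂ δ
      have hskip := Steps.orElse_of_retry (M₂ := M₂) hretry
      exact ⟨δ₂, hs.imp hskip.trans hskip.trans⟩
    · exact ⟨δ₁, .inr (Steps.orElse_of_done hdone)⟩

/-- orElse is idempotent up to weak atomic equivalence: M orElse M ≈ M. -/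
theorem stmt11 {N : Type*} [DecidableEq N] (M : Expr N) :
    AEq (.orElse M M) M := by
  intro σ
  obtain ⟨δ, hretry | hdone⟩ := exists_steps_retry_or_done M σ []
  · exact .inl ⟨⟨δ, (Steps.orElse_of_retry hretry).trans hretry⟩, ⟨δ, hretry⟩⟩
  · exact .inr ⟨δ, δ, Steps.orElse_of_done hdone, hdone, rfl⟩
end
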